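/- Transformation identities under the pair of maps (P_Φ, Q_Φ): for smooth vector fields v, η on the straightened tube, with P_Φ v(y) = J v(Φ^{-1}(y)) and Q_Φ η(y) = 𝔇^{-1} J η(Φ^{-1}(y)) where J = ∇Φ and 𝔇 = det J, the following hold: (i) ∇·(Q_Φ η) = (𝔇^{-1} ∇·η) ∘ Φ^{-1}; (ii) B[P_Φ v, Q_Φ η] = Q_Φ B[v, η], where B[f,g] = div(f⊗g - g⊗f). -/

import Mathlib

open MeasureTheory Real
open scoped ENNReal NNReal

noncomputable section

abbrev E3 := EuclideanSpace ℝ (Fin 3)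

def mk3v (v : Fin 3 → ℝ) : E3 := (WithLp.equiv 2 (Fin 3 → ℝ)).symm v

/-- Divergence of a vector field on `ℝ³`. -/
def div3 (f : E3 → E3) (y : E3) : ℝ :=
  ∑ i : Fin 3, fderiv ℝ f y (EuclideanSpace.single i 1) i

/-- The bilinear operator `B[f,g] = div(f⊗g - g⊗f)`, componentwise:
`B[f,g]_i = Σ_j ∂_j (f_i g_j - g_i f_j)`. -/
def Bop (f g : E3 → E3) (y : E3) : E3 :=
  mk3v fun i => ∑ j : Fin 3,
    fderiv ℝ (fun x => f x i * g x j - g x i * f x j) y (EuclideanSpace.single j 1)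

/-- The velocity transformation `P_Φ v (y) = J v(Φ⁻¹ y)` with `J = ∇Φ`. -/
def Pmap (Phi Psi : E3 → E3) (v : E3 → E3) (y : E3) : E3 :=
  (fderiv ℝ Phi (Psi y)) (v (Psi y))

/-- The vorticity transformation `Q_Φ η (y) = 𝔇⁻¹ J η(Φ⁻¹ y)` with `𝔇 = det J`. -/
def Qmap (Phi Psi : E3 → E3) (η : E3 → E3) (y : E3) : E3 :=
  ((fderiv ℝ Phi (Psi y)).det)⁻¹ • (fderiv ℝ Phi (Psi y)) (η (Psi y))


set_option maxHeartbeats 4000000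

private lemma proj_apply' (i : Fin 3) (w : E3) :
    (EuclideanSpace.proj i : E3 →L[ℝ] ℝ) w = w i := rfl

private lemma mk3v_apply (u : Fin 3 → ℝ) (i : Fin 3) : mk3v u i = u i := rfl

private lemma sum_single_eq (w : E3) :
    ∑ q : Fin 3, w q • (EuclideanSpace.single q (1:ℝ) : E3) = w := by
  simpa using (EuclideanSpace.basisFun (Fin 3) ℝ).toBasis.sum_repr w

private lemma clm_expandR (φ : E3 →L[ℝ] ℝ) (w : E3) :
    φ w = ∑ q : Fin 3, w q * φ (EuclideanSpace.single q 1) := by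
  conv_lhs => rw [← sum_single_eq w]
  rw [map_sum]
  simp [smul_eq_mul]

private lemma clm_entry (T : E3 →L[ℝ] E3) (w : E3) (p : Fin 3) :
    T w p = ∑ q : Fin 3, w q * T (EuclideanSpace.single q 1) p := by
  have h : T w p = ((EuclideanSpace.proj p).comp T) w := rfl
  rw [h, clm_expandR]
  rfl

private lemma mkE {A B : Fin 3 → Fin 3 → ℝ}
    (hBA : ∀ m l, ∑ j, B m j * A j l = if m = l then (1:ℝ) else 0) (m l : Fin 3) :
    B m 0 * A 0 l + B m 1 * A 1 l + B m 2 * A 2 l = if m = l then (1:ℝ) else 0 := by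
  rw [← hBA m l]; simp [Fin.sum_univ_three]

private lemma contract3 {A B : Fin 3 → Fin 3 → ℝ}
    (hBA : ∀ m l, ∑ j, B m j * A j l = if m = l then (1:ℝ) else 0)
    (c w : Fin 3 → ℝ) :
    ∑ j : Fin 3, ∑ m : Fin 3, B m j * (c m * ∑ l : Fin 3, A j l * w l) = ∑ m : Fin 3, c m * w m := by
  have E00 : B 0 0 * A 0 0 + B 0 1 * A 1 0 + B 0 2 * A 2 0 = 1 := by simpa using mkE hBA 0 0
  have E01 : B 0 0 * A 0 1 + B 0 1 * A 1 1 + B 0 2 * A 2 1 = 0 := by simpa using mkE hBA 0 1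
  have E02 : B 0 0 * A 0 2 + B 0 1 * A 1 2 + B 0 2 * A 2 2 = 0 := by simpa using mkE hBA 0 2
  have E10 : B 1 0 * A 0 0 + B 1 1 * A 1 0 + B 1 2 * A 2 0 = 0 := by simpa using mkE hBA 1 0
  have E11 : B 1 0 * A 0 1 + B 1 1 * A 1 1 + B 1 2 * A 2 1 = 1 := by simpa using mkE hBA 1 1
  have E12 : B 1 0 * A 0 2 + B 1 1 * A 1 2 + B 1 2 * A 2 2 = 0 := by simpa using mkE hBA 1 2
  have E20 : B 2 0 * A 0 0 + B 2 1 * A 1 0 + B 2 2 * A 2 0 = 0 := by simpa using mkE hBA 2 0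
  have E21 : B 2 0 * A 0 1 + B 2 1 * A 1 1 + B 2 2 * A 2 1 = 0 := by simpa using mkE hBA 2 1
  have E22 : B 2 0 * A 0 2 + B 2 1 * A 1 2 + B 2 2 * A 2 2 = 1 := by simpa using mkE hBA 2 2
  simp only [Fin.sum_univ_three]
  linear_combination c 0 * w 0 * E00 + c 0 * w 1 * E01 + c 0 * w 2 * E02 + c 1 * w 0 * E10 + c 1 * w 1 * E11 + c 1 * w 2 * E12 + c 2 * w 0 * E20 + c 2 * w 1 * E21 + c 2 * w 2 * E22

private lemma trace3 {A B : Fin 3 → Fin 3 → ℝ}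
    (hBA : ∀ m l, ∑ j, B m j * A j l = if m = l then (1:ℝ) else 0)
    (G : Fin 3 → Fin 3 → ℝ) :
    ∑ j : Fin 3, ∑ m : Fin 3, B m j * (∑ l : Fin 3, A j l * G l m) = ∑ m : Fin 3, G m m := by
  have E00 : B 0 0 * A 0 0 + B 0 1 * A 1 0 + B 0 2 * A 2 0 = 1 := by simpa using mkE hBA 0 0
  have E01 : B 0 0 * A 0 1 + B 0 1 * A 1 1 + B 0 2 * A 2 1 = 0 := by simpa using mkE hBA 0 1
  have E02 : B 0 0 * A 0 2 + B 0 1 * A 1 2 + B 0 2 * A 2 2 = 0 := by simpa using mkE hBA 0 2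
  have E10 : B 1 0 * A 0 0 + B 1 1 * A 1 0 + B 1 2 * A 2 0 = 0 := by simpa using mkE hBA 1 0
  have E11 : B 1 0 * A 0 1 + B 1 1 * A 1 1 + B 1 2 * A 2 1 = 1 := by simpa using mkE hBA 1 1
  have E12 : B 1 0 * A 0 2 + B 1 1 * A 1 2 + B 1 2 * A 2 2 = 0 := by simpa using mkE hBA 1 2
  have E20 : B 2 0 * A 0 0 + B 2 1 * A 1 0 + B 2 2 * A 2 0 = 0 := by simpa using mkE hBA 2 0
  have E21 : B 2 0 * A 0 1 + B 2 1 * A 1 1 + B 2 2 * A 2 1 = 0 := by simpa using mkE hBA 2 1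
  have E22 : B 2 0 * A 0 2 + B 2 1 * A 1 2 + B 2 2 * A 2 2 = 1 := by simpa using mkE hBA 2 2
  simp only [Fin.sum_univ_three]
  linear_combination G 0 0 * E00 + G 1 0 * E01 + G 2 0 * E02 + G 0 1 * E10 + G 1 1 * E11 + G 2 1 * E12 + G 0 2 * E20 + G 1 2 * E21 + G 2 2 * E22

private lemma sym3 {B : Fin 3 → Fin 3 → ℝ} {S : Fin 3 → Fin 3 → Fin 3 → ℝ} {T : Fin 3 → ℝ}
    (hS : ∀ p q j, S p q j = S p j q)
    (hT : ∀ l, T l = ∑ p : Fin 3, ∑ q : Fin 3, B q p * S p q l) (w : Fin 3 → ℝ) :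
    ∑ j : Fin 3, ∑ m : Fin 3, B m j * (∑ l : Fin 3, S j l m * w l) = ∑ l : Fin 3, T l * w l := by
  simp only [hT, Fin.sum_univ_three]
  linear_combination B 0 0 * w 0 * (hS 0 0 0) + B 0 0 * w 1 * (hS 0 1 0) + B 0 0 * w 2 * (hS 0 2 0) + B 0 1 * w 0 * (hS 1 0 0) + B 0 1 * w 1 * (hS 1 1 0) + B 0 1 * w 2 * (hS 1 2 0) + B 0 2 * w 0 * (hS 2 0 0) + B 0 2 * w 1 * (hS 2 1 0) + B 0 2 * w 2 * (hS 2 2 0) + B 1 0 * w 0 * (hS 0 0 1) + B 1 0 * w 1 * (hS 0 1 1) + B 1 0 * w 2 * (hS 0 2 1) + B 1 1 * w 0 * (hS 1 0 1) + B 1 1 * w 1 * (hS 1 1 1) + B 1 1 * w 2 * (hS 1 2 1) + B 1 2 * w 0 * (hS 2 0 1) + B 1 2 * w 1 * (hS 2 1 1) + B 1 2 * w 2 * (hS 2 2 1) + B 2 0 * w 0 * (hS 0 0 2) + B 2 0 * w 1 * (hS 0 1 2) + B 2 0 * w 2 * (hS 0 2 2) + B 2 1 * w 0 * (hS 1 0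 2) + B 2 1 * w 1 * (hS 1 1 2) + B 2 1 * w 2 * (hS 1 2 2) + B 2 2 * w 0 * (hS 2 0 2) + B 2 2 * w 1 * (hS 2 1 2) + B 2 2 * w 2 * (hS 2 2 2)

private lemma core_div {A B : Fin 3 → Fin 3 → ℝ} {S : Fin 3 → Fin 3 → Fin 3 → ℝ} {T : Fin 3 → ℝ}
    (hBA : ∀ m l, ∑ j, B m j * A j l = if m = l then (1:ℝ) else 0)
    (hS : ∀ p q j, S p q j = S p j q)
    (hT : ∀ l, T l = ∑ p : Fin 3, ∑ q : Fin 3, B q p * S p q l)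
    {d Dx : ℝ} {dD : Fin 3 → ℝ} (hdD : ∀ m, dD m = Dx * T m) (hd : d * Dx = 1)
    (W : Fin 3 → ℝ) (Gη : Fin 3 → Fin 3 → ℝ) :
    ∑ i : Fin 3, ∑ p : Fin 3, B p i *
        (-(d * d * dD p) * (∑ k : Fin 3, A i k * W k)
          + d * (∑ k : Fin 3, (S i k p * W k + A i k * Gη k p)))
      = d * ∑ k : Fin 3, Gη k k := by
  have h1 := contract3 hBA (fun p => -(d * d * dD p)) W
  have h2 := sym3 hS hT W
  have h3 := trace3 hBA Gη
  have bridge : ∑ i : Fin 3, ∑ p : Fin 3, B p i *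
        (-(d * d * dD p) * (∑ k : Fin 3, A i k * W k)
          + d * (∑ k : Fin 3, (S i k p * W k + A i k * Gη k p)))
      = (∑ j : Fin 3, ∑ m : Fin 3, B m j * ((fun p => -(d * d * dD p)) m * ∑ l : Fin 3, A j l * W l))
        + d * (∑ j : Fin 3, ∑ m : Fin 3, B m j * (∑ l : Fin 3, S j l m * W l))
        + d * (∑ j : Fin 3, ∑ m : Fin 3, B m j * (∑ l : Fin 3, A j l * Gη l m)) := by
    simp only [Fin.sum_univ_three]; ring
  rw [bridge, h1, h2, h3]
  simp only [hdD, Fin.sum_univ_three]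
  linear_combination (-(d * (T 0 * W 0 + T 1 * W 1 + T 2 * W 2))) * hd

private lemma core_bop {A B : Fin 3 → Fin 3 → ℝ} {S : Fin 3 → Fin 3 → Fin 3 → ℝ} {T : Fin 3 → ℝ}
    (hBA : ∀ m l, ∑ j, B m j * A j l = if m = l then (1:ℝ) else 0)
    (hS : ∀ p q j, S p q j = S p j q)
    (hT : ∀ l, T l = ∑ p : Fin 3, ∑ q : Fin 3, B q p * S p q l)
    {d Dx : ℝ} {dD : Fin 3 → ℝ} (hdD : ∀ m, dD m = Dx * T m) (hd : d * Dx = 1)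
    (V W : Fin 3 → ℝ) (Gv Gη : Fin 3 → Fin 3 → ℝ) (i : Fin 3) :
    ∑ j : Fin 3, ∑ t : Fin 3, B t j *
      ( (∑ k : Fin 3, (S i k t * V k + A i k * Gv k t)) * (d * ∑ l : Fin 3, A j l * W l)
      + (∑ k : Fin 3, A i k * V k) *
          (-(d * d * dD t) * (∑ l : Fin 3, A j l * W l)
            + d * (∑ l : Fin 3, (S j l t * W l + A j l * Gη l t)))
      - (-(d * d * dD t) * (∑ l : Fin 3, A i l * W l)
            + d * (∑ l : Fin 3, (S i l t * W l + A i l * Gη l t))) * (∑ k : Fin 3, A j k * V k)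
      - (d * ∑ l : Fin 3, A i l * W l) * (∑ k : Fin 3, (S j k t * V k + A j k * Gv k t)) )
    = d * ∑ k : Fin 3, A i k *
        (∑ j : Fin 3, (Gv k j * W j + V k * Gη j j - (Gη k j * V j + W k * Gv j j))) := by
  have h1 := contract3 hBA (fun t => d * (∑ k : Fin 3, (S i k t * V k + A i k * Gv k t))) W
  have h2a := contract3 hBA (fun t => -(d * d * dD t) * (∑ k : Fin 3, A i k * V k)) W
  have h2b := sym3 hS hT W
  have h2c := trace3 hBA Gη
  have h3 := contract3 hBA (fun t => -(d * d * dD t) * (∑ l : Fin 3, A i l * W l)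
      + d * (∑ l : Fin 3, (S i l t * W l + A i l * Gη l t))) V
  have h4a := sym3 hS hT V
  have h4b := trace3 hBA Gv
  have bridge : ∑ j : Fin 3, ∑ t : Fin 3, B t j *
      ( (∑ k : Fin 3, (S i k t * V k + A i k * Gv k t)) * (d * ∑ l : Fin 3, A j l * W l)
      + (∑ k : Fin 3, A i k * V k) *
          (-(d * d * dD t) * (∑ l : Fin 3, A j l * W l)
            + d * (∑ l : Fin 3, (S j l t * W l + A j l * Gη l t)))
      - (-(d * d * dD t) * (∑ l : Fin 3, A i l * W l)
            + d * (∑ l : Fin 3, (S i l t * W l + A i l * Gη l t))) * (∑ k : Fin 3, A j k * V k)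
      - (d * ∑ l : Fin 3, A i l * W l) * (∑ k : Fin 3, (S j k t * V k + A j k * Gv k t)) )
    = (∑ j : Fin 3, ∑ t : Fin 3, B t j *
          ((d * (∑ k : Fin 3, (S i k t * V k + A i k * Gv k t))) * ∑ l : Fin 3, A j l * W l))
      + (∑ j : Fin 3, ∑ t : Fin 3, B t j *
          ((-(d * d * dD t) * (∑ k : Fin 3, A i k * V k)) * ∑ l : Fin 3, A j l * W l))
      + ((∑ k : Fin 3, A i k * V k) * d) *
          (∑ j : Fin 3, ∑ t : Fin 3, B t j * (∑ l : Fin 3, S j l t * W l))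
      + ((∑ k : Fin 3, A i k * V k) * d) *
          (∑ j : Fin 3, ∑ t : Fin 3, B t j * (∑ l : Fin 3, A j l * Gη l t))
      - (∑ j : Fin 3, ∑ t : Fin 3, B t j *
          ((-(d * d * dD t) * (∑ l : Fin 3, A i l * W l)
            + d * (∑ l : Fin 3, (S i l t * W l + A i l * Gη l t))) * ∑ l : Fin 3, A j l * V l))
      - ((d * ∑ l : Fin 3, A i l * W l)) *
          (∑ j : Fin 3, ∑ t : Fin 3, B t j * (∑ l : Fin 3, S j l t * V l))
      - (d * ∑ l : Fin 3, A i l * W l) *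
          (∑ j : Fin 3, ∑ t : Fin 3, B t j * (∑ l : Fin 3, A j l * Gv l t)) := by
    simp only [Fin.sum_univ_three]; ring
  rw [bridge, h1, h2a, h2b, h2c, h3, h4a, h4b]
  simp only [hdD, Fin.sum_univ_three]
  linear_combination (d * ((A i 0 * W 0 + A i 1 * W 1 + A i 2 * W 2) *
      (T 0 * V 0 + T 1 * V 1 + T 2 * V 2)
    - (A i 0 * V 0 + A i 1 * V 1 + A i 2 * V 2) *
      (T 0 * W 0 + T 1 * W 1 + T 2 * W 2))) * hd + d * V 0 * W 1 * (hS i 0 1) + d * V 0 * W 2 * (hS i 0 2) + d * V 1 * W 0 * (hS i 1 0) + d * V 1 * W 2 * (hS i 1 2) + d * V 2 * W 0 * (hS i 2 0) + d * V 2 * W 1 * (hS i 2 1)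

/-- Transformation identities under `(P_Φ, Q_Φ)` for a smooth
diffeomorphism `Φ : U → V` with inverse `Ψ`:
(i) `∇·(Q_Φ η) = (𝔇⁻¹ ∇·η)∘Φ⁻¹`;
(ii) `B[P_Φ v, Q_Φ η] = Q_Φ B[v,η]`. -/
theorem transformation_identities (U V : Set E3) (hU : IsOpen U) (hV : IsOpen V)
    (Phi Psi : E3 → E3) (hPhi : ContDiff ℝ (⊤ : ℕ∞) Phi) (hPsi : ContDiffOn ℝ (⊤ : ℕ∞) Psi V)
    (hbij : Set.BijOn Phi U V)
    (hinv1 : ∀ x ∈ U, Psi (Phi x) = x)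
    (hinv2 : ∀ y ∈ V, Phi (Psi y) = y ∧ Psi y ∈ U)
    (hdet : ∀ x ∈ U, (fderiv ℝ Phi x).det ≠ 0)
    (v η : E3 → E3) (hv : ContDiff ℝ (⊤ : ℕ∞) v) (hη : ContDiff ℝ (⊤ : ℕ∞) η) :
    ∀ y ∈ V,
      div3 (Qmap Phi Psi η) y = ((fderiv ℝ Phi (Psi y)).det)⁻¹ * div3 η (Psi y) ∧
      Bop (Pmap Phi Psi v) (Qmap Phi Psi η) y =
        ((fderiv ℝ Phi (Psi y)).det)⁻¹ • (fderiv ℝ Phi (Psi y)) (Bop v η (Psi y)) := by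
  intro y hy
  obtain ⟨hPhiPsi, hxU⟩ := hinv2 y hy
  have hVmem : V ∈ nhds y := hV.mem_nhds hy
  have hPhiDiff : Differentiable ℝ Phi := hPhi.differentiable (by simp)
  have hPsiDiffAt : DifferentiableAt ℝ Psi y :=
    ((hPsi.differentiableOn (by simp)) y hy).differentiableAt hVmem
  have hJ : HasFDerivAt Phi (fderiv ℝ Phi (Psi y)) (Psi y) := (hPhiDiff (Psi y)).hasFDerivAt
  have hL : HasFDerivAt Psi (fderiv ℝ Psi y) y := hPsiDiffAt.hasFDerivAt
  -- inverse relations for the derivatives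
  have hid2 : (fderiv ℝ Psi y).comp (fderiv ℝ Phi (Psi y)) = ContinuousLinearMap.id ℝ E3 := by
    have hL' : HasFDerivAt Psi (fderiv ℝ Psi y) (Phi (Psi y)) := by rw [hPhiPsi]; exact hL
    have hcomp : HasFDerivAt (Psi ∘ Phi) ((fderiv ℝ Psi y).comp (fderiv ℝ Phi (Psi y))) (Psi y) :=
      hL'.comp (Psi y) hJ
    have heq : (Psi ∘ Phi) =ᶠ[nhds (Psi y)] id :=
      Filter.eventuallyEq_of_mem (hU.mem_nhds hxU) (fun z hz => hinv1 z hz)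
    exact (hcomp.congr_of_eventuallyEq heq.symm).unique (hasFDerivAt_id (Psi y))
  have hid1 : (fderiv ℝ Phi (Psi y)).comp (fderiv ℝ Psi y) = ContinuousLinearMap.id ℝ E3 := by
    have hcomp : HasFDerivAt (Phi ∘ Psi) ((fderiv ℝ Phi (Psi y)).comp (fderiv ℝ Psi y)) y :=
      hJ.comp y hL
    have heq : (Phi ∘ Psi) =ᶠ[nhds y] id :=
      Filter.eventuallyEq_of_mem hVmem (fun z hz => (hinv2 z hz).1)
    exact (hcomp.congr_of_eventuallyEq heq.symm).unique (hasFDerivAt_id y)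
  -- matrix inverse relations
  have hBA : ∀ m l : Fin 3, ∑ j : Fin 3, fderiv ℝ Psi y (EuclideanSpace.single j 1) m * fderiv ℝ Phi (Psi y) (EuclideanSpace.single l 1) j
      = if m = l then (1:ℝ) else 0 := by
    intro m l
    have h1 : fderiv ℝ Psi y (fderiv ℝ Phi (Psi y) (EuclideanSpace.single l 1)) m = (if m = l then (1:ℝ) else 0) := by
      rw [show fderiv ℝ Psi y (fderiv ℝ Phi (Psi y) (EuclideanSpace.single l 1))
          = ((fderiv ℝ Psi y).comp (fderiv ℝ Phi (Psi y))) (EuclideanSpace.single l 1) from rfl,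
        hid2, ContinuousLinearMap.id_apply, EuclideanSpace.single_apply]
    rw [clm_entry (fderiv ℝ Psi y) (fderiv ℝ Phi (Psi y) (EuclideanSpace.single l 1)) m] at h1
    rw [← h1]
    exact Finset.sum_congr rfl fun q _ => by rw [mul_comm]
  have hAB : ∀ m l : Fin 3, ∑ j : Fin 3, fderiv ℝ Phi (Psi y) (EuclideanSpace.single j 1) m * fderiv ℝ Psi y (EuclideanSpace.single l 1) j
      = if m = l then (1:ℝ) else 0 := by
    intro m l
    have h1 : fderiv ℝ Phi (Psi y) (fderiv ℝ Psi y (EuclideanSpace.single l 1)) m = (if m = l then (1:ℝ) else 0) := by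
      rw [show fderiv ℝ Phi (Psi y) (fderiv ℝ Psi y (EuclideanSpace.single l 1))
          = ((fderiv ℝ Phi (Psi y)).comp (fderiv ℝ Psi y)) (EuclideanSpace.single l 1) from rfl,
        hid1, ContinuousLinearMap.id_apply, EuclideanSpace.single_apply]
    rw [clm_entry (fderiv ℝ Phi (Psi y)) (fderiv ℝ Psi y (EuclideanSpace.single l 1)) m] at h1
    rw [← h1]
    exact Finset.sum_congr rfl fun q _ => by rw [mul_comm]
  -- determinant of the CLM equals the matrix determinant
  have hdetEq : ∀ z : E3, (fderiv ℝ Phi z).det =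
      (Matrix.of fun p q : Fin 3 => fderiv ℝ Phi z (EuclideanSpace.single q 1) p).det := by
    intro z
    have h := LinearMap.det_toMatrix ((EuclideanSpace.basisFun (Fin 3) ℝ).toBasis)
      ((fderiv ℝ Phi z : E3 →L[ℝ] E3) : E3 →ₗ[ℝ] E3)
    rw [ContinuousLinearMap.det, ← h]
    apply congrArg Matrix.det
    ext p q
    rw [LinearMap.toMatrix_apply]
    simp [EuclideanSpace.basisFun_repr, OrthonormalBasis.coe_toBasis, EuclideanSpace.basisFun_apply]
  -- second derivative symmetry
  have hPhi2 : ContDiff ℝ (⊤ : ℕ∞) (fderiv ℝ Phi) := hPhi.fderiv_right (by simp)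
  have hf'' : HasFDerivAt (fderiv ℝ Phi) (fderiv ℝ (fderiv ℝ Phi) (Psi y)) (Psi y) :=
    ((hPhi2.differentiable (by simp)) (Psi y)).hasFDerivAt
  have hS : ∀ p q j : Fin 3, fderiv ℝ (fderiv ℝ Phi) (Psi y) (EuclideanSpace.single j 1) (EuclideanSpace.single q 1) p = fderiv ℝ (fderiv ℝ Phi) (Psi y) (EuclideanSpace.single q 1) (EuclideanSpace.single j 1) p := by
    intro p q j
    have h := second_derivative_symmetric (fun z => (hPhiDiff z).hasFDerivAt) hf''
      (EuclideanSpace.single j 1) (EuclideanSpace.single q 1)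
    rw [h]
  -- derivatives of the matrix entries
  have haE : ∀ p q : Fin 3, HasFDerivAt (fun z => fderiv ℝ Phi z (EuclideanSpace.single q 1) p)
      (((EuclideanSpace.proj p).comp
          (ContinuousLinearMap.apply ℝ E3 (EuclideanSpace.single q 1))).comp
        (fderiv ℝ (fderiv ℝ Phi) (Psi y))) (Psi y) := by
    intro p q
    exact (((EuclideanSpace.proj p).comp
      (ContinuousLinearMap.apply ℝ E3 (EuclideanSpace.single q 1))).hasFDerivAt).comp (Psi y) hf''
  -- derivative of the determinant function
  obtain ⟨Dd, hDd, hDdval⟩ : ∃ Dd : E3 →L[ℝ] ℝ,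
      HasFDerivAt (fun z => (Matrix.of fun p q : Fin 3 => fderiv ℝ Phi z (EuclideanSpace.single q 1) p).det) Dd (Psi y) ∧
      ∀ j : Fin 3, Dd (EuclideanSpace.single j 1) =
        ∑ p : Fin 3, ∑ q : Fin 3,
          (Matrix.of fun p' q' : Fin 3 =>
            fderiv ℝ Phi (Psi y) (EuclideanSpace.single q' 1) p').adjugate q p *
          fderiv ℝ (fderiv ℝ Phi) (Psi y) (EuclideanSpace.single j 1) (EuclideanSpace.single q 1) p := by
    have hpoly := (((((((haE 0 0).fun_mul (haE 1 1)).fun_mul (haE 2 2)).fun_sub (((haE 0 0).fun_mul (haE 1 2)).fun_mul (haE 2 1))).fun_sub (((haE 0 1).fun_mul (haE 1 0)).fun_mul (haE 2 2))).fun_add (((haE 0 1).fun_mul (haE 1 2)).fun_mul (haE 2 0))).fun_add (((haE 0 2).fun_mul (haE 1 0)).fun_mul (haE 2 1))).fun_sub (((haE 0 2).fun_mul (haE 1 1)).fun_mul (haE 2 0))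
    have hDfunEq : (fun z => (Matrix.of fun p q : Fin 3 => fderiv ℝ Phi z (EuclideanSpace.single q 1) p).det) = fun z => fderiv ℝ Phi z (EuclideanSpace.single 0 1) 0 * fderiv ℝ Phi z (EuclideanSpace.single 1 1) 1 * fderiv ℝ Phi z (EuclideanSpace.single 2 1) 2 - fderiv ℝ Phi z (EuclideanSpace.single 0 1) 0 * fderiv ℝ Phi z (EuclideanSpace.single 2 1) 1 * fderiv ℝ Phi z (EuclideanSpace.single 1 1) 2 - fderiv ℝ Phi z (EuclideanSpace.single 1 1) 0 * fderiv ℝ Phi z (EuclideanSpace.single 0 1) 1 * fderiv ℝ Phi z (EuclideanSpace.single 2 1) 2 + fderiv ℝ Phi z (EuclideanSpace.single 1 1) 0 * fderiv ℝ Phi z (EuclideanSpace.single 2 1) 1 * fderiv ℝ Phi z (EuclideanSpace.single 0 1) 2 + fderiv ℝ Phi z (EuclideanSpace.single 2 1) 0 * fderiv ℝ Phi z (EuclideanSpace.single 0 1) 1 * fderiv ℝ Phi z (EuclideanSpace.single 1 1) 2 - fderiv ℝ Phi z (EuclideanSpace.single 2 1) 0 * fderiv ℝ Phi z (EuclideanSpace.single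 1 1) 1 * fderiv ℝ Phi z (EuclideanSpace.single 0 1) 2 := by
      funext z
      simp only [Matrix.det_fin_three, Matrix.of_apply]
    rw [← hDfunEq] at hpoly
    refine ⟨_, hpoly, ?_⟩
    intro j
    simp only [ContinuousLinearMap.add_apply, ContinuousLinearMap.sub_apply,
      ContinuousLinearMap.smul_apply, ContinuousLinearMap.comp_apply,
      ContinuousLinearMap.apply_apply, proj_apply', smul_eq_mul,
      Matrix.adjugate_fin_three, Matrix.of_apply, Fin.sum_univ_three,
      Matrix.cons_val_zero, Matrix.cons_val_one, Matrix.head_cons, Matrix.cons_val_two,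
      Matrix.tail_cons, Matrix.head_fin_const]
    ring
  have hDx0 : ((Matrix.of fun p q : Fin 3 => fderiv ℝ Phi (Psi y) (EuclideanSpace.single q 1) p).det) ≠ 0 := by
    rw [← hdetEq (Psi y)]; exact hdet (Psi y) hxU
  -- adjugate relation
  have hABmat : (Matrix.of fun p q : Fin 3 => fderiv ℝ Phi (Psi y) (EuclideanSpace.single q 1) p) *
      (Matrix.of fun p q : Fin 3 => fderiv ℝ Psi y (EuclideanSpace.single q 1) p) = 1 := by
    ext m l
    rw [Matrix.mul_apply, Matrix.one_apply]
    simpa [Matrix.of_apply] using hAB m l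
  have hBmxeq : (Matrix.of fun p q : Fin 3 => fderiv ℝ Phi (Psi y) (EuclideanSpace.single q 1) p)⁻¹
      = (Matrix.of fun p q : Fin 3 => fderiv ℝ Psi y (EuclideanSpace.single q 1) p) :=
    Matrix.inv_eq_right_inv hABmat
  have hadj : ∀ p q : Fin 3, ((Matrix.of fun p q : Fin 3 => fderiv ℝ Phi (Psi y) (EuclideanSpace.single q 1) p).det) * fderiv ℝ Psi y (EuclideanSpace.single q 1) p =
      (Matrix.of fun p' q' : Fin 3 =>
        fderiv ℝ Phi (Psi y) (EuclideanSpace.single q' 1) p').adjugate p q := by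
    intro p q
    have h3 : fderiv ℝ Psi y (EuclideanSpace.single q 1) p = ((Matrix.of fun p q : Fin 3 => fderiv ℝ Phi (Psi y) (EuclideanSpace.single q 1) p).det)⁻¹ *
        (Matrix.of fun p' q' : Fin 3 =>
          fderiv ℝ Phi (Psi y) (EuclideanSpace.single q' 1) p').adjugate p q := by
      have h4 := congrFun (congrFun hBmxeq.symm p) q
      rw [Matrix.inv_def] at h4
      simpa [Matrix.smul_apply, smul_eq_mul, Ring.inverse_eq_inv'] using h4
    rw [h3]
    exact mul_inv_cancel_left₀ hDx0 _
  have hdDmain : ∀ m : Fin 3, Dd (EuclideanSpace.single m 1) =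
      ((Matrix.of fun p q : Fin 3 => fderiv ℝ Phi (Psi y) (EuclideanSpace.single q 1) p).det) * (∑ p : Fin 3, ∑ q : Fin 3, fderiv ℝ Psi y (EuclideanSpace.single p 1) q * fderiv ℝ (fderiv ℝ Phi) (Psi y) (EuclideanSpace.single m 1) (EuclideanSpace.single q 1) p) := by
    intro m
    rw [hDdval m]
    simp only [Fin.sum_univ_three]
    linear_combination (-(fderiv ℝ (fderiv ℝ Phi) (Psi y) (EuclideanSpace.single m 1) (EuclideanSpace.single 0 1) 0)) * hadj 0 0 + (-(fderiv ℝ (fderiv ℝ Phi) (Psi y) (EuclideanSpace.single m 1) (EuclideanSpace.single 1 1) 0)) * hadj 1 0 + (-(fderiv ℝ (fderiv ℝ Phi) (Psi y) (EuclideanSpace.single m 1) (EuclideanSpace.single 2 1) 0)) * hadj 2 0 + (-(fderiv ℝ (fderiv ℝ Phi) (Psi y) (EuclideanSpace.single m 1) (EuclideanSpace.single 0 1) 1)) * hadj 0 1 + (-(fderiv ℝ (fderiv ℝ Phi) (Psi y) (EuclideanSpace.single m 1) (EuclideanSpace.single 1 1) 1)) * hadj 1 1 + (-(fderiv ℝ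 (fderiv ℝ Phi) (Psi y) (EuclideanSpace.single m 1) (EuclideanSpace.single 2 1) 1)) * hadj 2 1 + (-(fderiv ℝ (fderiv ℝ Phi) (Psi y) (EuclideanSpace.single m 1) (EuclideanSpace.single 0 1) 2)) * hadj 0 2 + (-(fderiv ℝ (fderiv ℝ Phi) (Psi y) (EuclideanSpace.single m 1) (EuclideanSpace.single 1 1) 2)) * hadj 1 2 + (-(fderiv ℝ (fderiv ℝ Phi) (Psi y) (EuclideanSpace.single m 1) (EuclideanSpace.single 2 1) 2)) * hadj 2 2
  -- derivative of the inverse determinant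
  obtain ⟨Di, hDi, hDival⟩ : ∃ Di : E3 →L[ℝ] ℝ,
      HasFDerivAt (fun z => ((Matrix.of fun p q : Fin 3 => fderiv ℝ Phi z (EuclideanSpace.single q 1) p).det)⁻¹) Di (Psi y) ∧
      ∀ p : Fin 3, Di (EuclideanSpace.single p 1) =
        -(((Matrix.of fun p q : Fin 3 => fderiv ℝ Phi (Psi y) (EuclideanSpace.single q 1) p).det)⁻¹ * ((Matrix.of fun p q : Fin 3 => fderiv ℝ Phi (Psi y) (EuclideanSpace.single q 1) p).det)⁻¹ * Dd (EuclideanSpace.single p 1)) := by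
    refine ⟨_, (hasFDerivAt_inv hDx0).comp (Psi y) hDd, ?_⟩
    intro p
    have hsq : (((Matrix.of fun p q : Fin 3 => fderiv ℝ Phi (Psi y) (EuclideanSpace.single q 1) p).det) ^ 2)⁻¹ = ((Matrix.of fun p q : Fin 3 => fderiv ℝ Phi (Psi y) (EuclideanSpace.single q 1) p).det)⁻¹ * ((Matrix.of fun p q : Fin 3 => fderiv ℝ Phi (Psi y) (EuclideanSpace.single q 1) p).det)⁻¹ := by rw [sq, mul_inv]
    simp only [ContinuousLinearMap.comp_apply, ContinuousLinearMap.smulRight_apply,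
      ContinuousLinearMap.one_apply, ContinuousLinearMap.toSpanSingleton_apply, smul_eq_mul, hsq]
    ring
  -- component derivatives of η and v
  have hηd : HasFDerivAt η (fderiv ℝ η (Psi y)) (Psi y) := ((hη.differentiable (by simp)) (Psi y)).hasFDerivAt
  have hvd : HasFDerivAt v (fderiv ℝ v (Psi y)) (Psi y) := ((hv.differentiable (by simp)) (Psi y)).hasFDerivAt
  have hηc : ∀ k : Fin 3, HasFDerivAt (fun z => η z k)
      ((EuclideanSpace.proj k).comp (fderiv ℝ η (Psi y))) (Psi y) := by
    intro k
    exact HasFDerivAt.comp (Psi y)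
      ((EuclideanSpace.proj k : E3 →L[ℝ] ℝ).hasFDerivAt (x := η (Psi y))) hηd
  have hvc : ∀ k : Fin 3, HasFDerivAt (fun z => v z k)
      ((EuclideanSpace.proj k).comp (fderiv ℝ v (Psi y))) (Psi y) := by
    intro k
    exact HasFDerivAt.comp (Psi y)
      ((EuclideanSpace.proj k : E3 →L[ℝ] ℝ).hasFDerivAt (x := v (Psi y))) hvd
  -- packaged derivatives of the transported component functions
  have hFQex : ∀ i : Fin 3, ∃ F' : E3 →L[ℝ] ℝ,
      HasFDerivAt (fun z => ((Matrix.of fun p q : Fin 3 => fderiv ℝ Phi z (EuclideanSpace.single q 1) p).det)⁻¹ *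
        (∑ k : Fin 3, η z k * fderiv ℝ Phi z (EuclideanSpace.single k 1) i)) F' (Psi y) ∧
      ∀ p : Fin 3, F' (EuclideanSpace.single p 1) = -(((Matrix.of fun p q : Fin 3 => fderiv ℝ Phi (Psi y) (EuclideanSpace.single q 1) p).det)⁻¹ * ((Matrix.of fun p q : Fin 3 => fderiv ℝ Phi (Psi y) (EuclideanSpace.single q 1) p).det)⁻¹ * Dd (EuclideanSpace.single p 1)) * (∑ k : Fin 3, fderiv ℝ Phi (Psi y) (EuclideanSpace.single k 1) i * η (Psi y) k) + ((Matrix.of fun p q : Fin 3 => fderiv ℝ Phi (Psi y) (EuclideanSpace.single q 1) p).det)⁻¹ * (∑ k : Fin 3, (fderiv ℝ (fderiv ℝ Phi) (Psi y) (EuclideanSpace.single p 1) (EuclideanSpace.single k 1) i * η (Psi y) k + fderiv ℝ Phi (Psi y) (EuclideanSpace.single k 1) i * fderiv ℝ η (Psi y) (EuclideanSpace.single p 1) k)) := by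
    intro i
    refine ⟨_, hDi.fun_mul (HasFDerivAt.fun_sum fun k _ => (hηc k).fun_mul (haE i k)), ?_⟩
    intro p
    simp only [ContinuousLinearMap.add_apply, ContinuousLinearMap.smul_apply,
      ContinuousLinearMap.sum_apply, ContinuousLinearMap.comp_apply,
      ContinuousLinearMap.apply_apply, proj_apply', smul_eq_mul, hDival p, Fin.sum_univ_three]
    ring
  have hFPex : ∀ i : Fin 3, ∃ F' : E3 →L[ℝ] ℝ,
      HasFDerivAt (fun z =>
        ∑ k : Fin 3, v z k * fderiv ℝ Phi z (EuclideanSpace.single k 1) i) F' (Psi y) ∧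
      ∀ p : Fin 3, F' (EuclideanSpace.single p 1) = ∑ k : Fin 3, (fderiv ℝ (fderiv ℝ Phi) (Psi y) (EuclideanSpace.single p 1) (EuclideanSpace.single k 1) i * v (Psi y) k + fderiv ℝ Phi (Psi y) (EuclideanSpace.single k 1) i * fderiv ℝ v (Psi y) (EuclideanSpace.single p 1) k) := by
    intro i
    refine ⟨_, HasFDerivAt.fun_sum fun k _ => (hvc k).fun_mul (haE i k), ?_⟩
    intro p
    simp only [ContinuousLinearMap.add_apply, ContinuousLinearMap.smul_apply,
      ContinuousLinearMap.sum_apply, ContinuousLinearMap.comp_apply,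
      ContinuousLinearMap.apply_apply, proj_apply', smul_eq_mul, Fin.sum_univ_three]
    ring
  choose FQ hFQ hFQval using hFQex
  choose FP hFP hFPval using hFPex
  have hq : ∀ i : Fin 3, HasFDerivAt (fun y' => ((Matrix.of fun p q : Fin 3 => fderiv ℝ Phi (Psi y') (EuclideanSpace.single q 1) p).det)⁻¹ *
      (∑ k : Fin 3, η (Psi y') k * fderiv ℝ Phi (Psi y') (EuclideanSpace.single k 1) i))
      ((FQ i).comp (fderiv ℝ Psi y)) y := fun i => (hFQ i).comp y hL
  have hp : ∀ i : Fin 3, HasFDerivAt (fun y' =>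
      ∑ k : Fin 3, v (Psi y') k * fderiv ℝ Phi (Psi y') (EuclideanSpace.single k 1) i)
      ((FP i).comp (fderiv ℝ Psi y)) y := fun i => (hFP i).comp y hL
  have hexp : ∀ (F : E3 →L[ℝ] ℝ) (j : Fin 3), (F.comp (fderiv ℝ Psi y)) (EuclideanSpace.single j 1)
      = ∑ t : Fin 3, fderiv ℝ Psi y (EuclideanSpace.single j 1) t * F (EuclideanSpace.single t 1) := by
    intro F j
    rw [ContinuousLinearMap.comp_apply, clm_expandR]
  -- pointwise component identities
  have hQcomp : ∀ (y' : E3) (i : Fin 3), Qmap Phi Psi η y' i = ((Matrix.of fun p q : Fin 3 => fderiv ℝ Phi (Psi y') (EuclideanSpace.single q 1) p).det)⁻¹ *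
      (∑ k : Fin 3, η (Psi y') k * fderiv ℝ Phi (Psi y') (EuclideanSpace.single k 1) i) := by
    intro y' i
    simp only [Qmap]
    rw [PiLp.smul_apply, smul_eq_mul, hdetEq (Psi y'), clm_entry]
  have hPcomp : ∀ (y' : E3) (i : Fin 3), Pmap Phi Psi v y' i =
      ∑ k : Fin 3, v (Psi y') k * fderiv ℝ Phi (Psi y') (EuclideanSpace.single k 1) i := by
    intro y' i
    simp only [Pmap]
    rw [clm_entry]
  have hQfun : Qmap Phi Psi η = fun y' => mk3v (fun i => ((Matrix.of fun p q : Fin 3 => fderiv ℝ Phi (Psi y') (EuclideanSpace.single q 1) p).det)⁻¹ *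
      (∑ k : Fin 3, η (Psi y') k * fderiv ℝ Phi (Psi y') (EuclideanSpace.single k 1) i)) :=
    funext fun y' => PiLp.ext fun i => by rw [hQcomp y' i, mk3v_apply]
  -- derivative of the transported vector field
  have hQD : HasFDerivAt (fun y' => mk3v (fun i => ((Matrix.of fun p q : Fin 3 => fderiv ℝ Phi (Psi y') (EuclideanSpace.single q 1) p).det)⁻¹ *
      (∑ k : Fin 3, η (Psi y') k * fderiv ℝ Phi (Psi y') (EuclideanSpace.single k 1) i)))
      (((PiLp.continuousLinearEquiv 2 ℝ (fun _ : Fin 3 => ℝ)).symm :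
          (Fin 3 → ℝ) →L[ℝ] E3).comp
        (ContinuousLinearMap.pi (fun i => (FQ i).comp (fderiv ℝ Psi y)))) y := by
    have hpi : HasFDerivAt (fun y' (i : Fin 3) => ((Matrix.of fun p q : Fin 3 => fderiv ℝ Phi (Psi y') (EuclideanSpace.single q 1) p).det)⁻¹ *
        (∑ k : Fin 3, η (Psi y') k * fderiv ℝ Phi (Psi y') (EuclideanSpace.single k 1) i))
        (ContinuousLinearMap.pi (fun i => (FQ i).comp (fderiv ℝ Psi y))) y :=
      hasFDerivAt_pi.mpr fun i => hq i
    exact (((PiLp.continuousLinearEquiv 2 ℝ (fun _ : Fin 3 => ℝ)).symm :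
      (Fin 3 → ℝ) →L[ℝ] E3).hasFDerivAt).comp y hpi
  have hfQ : fderiv ℝ (Qmap Phi Psi η) y =
      ((PiLp.continuousLinearEquiv 2 ℝ (fun _ : Fin 3 => ℝ)).symm :
          (Fin 3 → ℝ) →L[ℝ] E3).comp
        (ContinuousLinearMap.pi (fun i => (FQ i).comp (fderiv ℝ Psi y))) := by
    rw [hQfun]
    exact hQD.fderiv
  have hd1 : ((Matrix.of fun p q : Fin 3 => fderiv ℝ Phi (Psi y) (EuclideanSpace.single q 1) p).det)⁻¹ * ((Matrix.of fun p q : Fin 3 => fderiv ℝ Phi (Psi y) (EuclideanSpace.single q 1) p).det) = 1 := inv_mul_cancel₀ hDx0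
  constructor
  · -- part (i)
    have hdiv1 : div3 (Qmap Phi Psi η) y =
        ∑ i : Fin 3, ∑ p : Fin 3, fderiv ℝ Psi y (EuclideanSpace.single i 1) p * (-(((Matrix.of fun p q : Fin 3 => fderiv ℝ Phi (Psi y) (EuclideanSpace.single q 1) p).det)⁻¹ * ((Matrix.of fun p q : Fin 3 => fderiv ℝ Phi (Psi y) (EuclideanSpace.single q 1) p).det)⁻¹ * Dd (EuclideanSpace.single p 1)) * (∑ k : Fin 3, fderiv ℝ Phi (Psi y) (EuclideanSpace.single k 1) i * η (Psi y) k) + ((Matrix.of fun p q : Fin 3 => fderiv ℝ Phi (Psi y) (EuclideanSpace.single q 1) p).det)⁻¹ * (∑ k : Fin 3, (fderiv ℝ (fderiv ℝ Phi) (Psi y) (EuclideanSpace.single p 1) (EuclideanSpace.single k 1) i * η (Psi y) k + fderiv ℝ Phi (Psi y) (EuclideanSpace.single k 1) i * fderiv ℝ η (Psi y) (EuclideanSpace.single p 1) k))) := by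
      simp only [div3, hfQ]
      refine Finset.sum_congr rfl fun i _ => ?_
      have h1 : (((PiLp.continuousLinearEquiv 2 ℝ (fun _ : Fin 3 => ℝ)).symm :
          (Fin 3 → ℝ) →L[ℝ] E3).comp
          (ContinuousLinearMap.pi (fun i' => (FQ i').comp (fderiv ℝ Psi y))))
            (EuclideanSpace.single i 1) i
          = ((FQ i).comp (fderiv ℝ Psi y)) (EuclideanSpace.single i 1) := rfl
      rw [h1, hexp]
      exact Finset.sum_congr rfl fun p _ => by rw [hFQval i p]
    have hcore := core_div
      (A := fun p q => fderiv ℝ Phi (Psi y) (EuclideanSpace.single q 1) p)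
      (B := fun p q => fderiv ℝ Psi y (EuclideanSpace.single q 1) p)
      (S := fun p q j => fderiv ℝ (fderiv ℝ Phi) (Psi y)
        (EuclideanSpace.single j 1) (EuclideanSpace.single q 1) p)
      (T := fun l => ∑ p : Fin 3, ∑ q : Fin 3,
        fderiv ℝ Psi y (EuclideanSpace.single p 1) q *
        fderiv ℝ (fderiv ℝ Phi) (Psi y) (EuclideanSpace.single l 1) (EuclideanSpace.single q 1) p)
      hBA hS (fun l => rfl) (dD := fun m => Dd (EuclideanSpace.single m 1))
      hdDmain hd1
      (fun k => η (Psi y) k) (fun k m => fderiv ℝ η (Psi y) (EuclideanSpace.single m 1) k)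
    rw [hdiv1, hdetEq (Psi y)]
    simp only [div3]
    exact hcore
  · -- part (ii)
    have hfd_ij : ∀ i j : Fin 3, fderiv ℝ (fun y' =>
        Pmap Phi Psi v y' i * Qmap Phi Psi η y' j
          - Qmap Phi Psi η y' i * Pmap Phi Psi v y' j) y (EuclideanSpace.single j 1)
        = ∑ t : Fin 3, fderiv ℝ Psi y (EuclideanSpace.single j 1) t * ((∑ k : Fin 3, (fderiv ℝ (fderiv ℝ Phi) (Psi y) (EuclideanSpace.single t 1) (EuclideanSpace.single k 1) i * v (Psi y) k + fderiv ℝ Phi (Psi y) (EuclideanSpace.single k 1) i * fderiv ℝ v (Psi y) (EuclideanSpace.single t 1) k)) * (((Matrix.of fun p q : Fin 3 => fderiv ℝ Phi (Psi y) (EuclideanSpace.single q 1) p).det)⁻¹ * ∑ l : Fin 3, fderiv ℝ Phi (Psi y) (EuclideanSpace.single l 1) j * η (Psi y) l) + (∑ k : Fin 3, fderiv ℝ Phi (Psi y) (EuclideanSpace.single k 1) i * v (Psi y) k) * (-(((Matrix.of fun p q : Fin 3 => fderiv ℝ Phi (Psi y) (EuclideanSpace.single q 1) p).det)⁻¹ *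 ((Matrix.of fun p q : Fin 3 => fderiv ℝ Phi (Psi y) (EuclideanSpace.single q 1) p).det)⁻¹ * Dd (EuclideanSpace.single t 1)) * (∑ l : Fin 3, fderiv ℝ Phi (Psi y) (EuclideanSpace.single l 1) j * η (Psi y) l) + ((Matrix.of fun p q : Fin 3 => fderiv ℝ Phi (Psi y) (EuclideanSpace.single q 1) p).det)⁻¹ * (∑ l : Fin 3, (fderiv ℝ (fderiv ℝ Phi) (Psi y) (EuclideanSpace.single t 1) (EuclideanSpace.single l 1) j * η (Psi y) l + fderiv ℝ Phi (Psi y) (EuclideanSpace.single l 1) j * fderiv ℝ η (Psi y) (EuclideanSpace.single t 1) l))) - (-(((Matrix.of fun p q : Fin 3 => fderiv ℝ Phi (Psi y) (EuclideanSpace.single q 1) p).det)⁻¹ * ((Matrix.of fun p q : Fin 3 => fderiv ℝ Phi (Psi y) (EuclideanSpace.single q 1) p).det)⁻¹ * Dd (EuclideanSpace.single t 1)) * (∑ l : Fin 3, fderiv ℝ Phi (Psi y) (EuclideanSpace.single l 1) i * η (Psi y) l) + ((Matrix.of fun p q : Fin 3 => fderiv ℝ Phi (Psi y) (EuclideanSpace.single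 q 1) p).det)⁻¹ * (∑ l : Fin 3, (fderiv ℝ (fderiv ℝ Phi) (Psi y) (EuclideanSpace.single t 1) (EuclideanSpace.single l 1) i * η (Psi y) l + fderiv ℝ Phi (Psi y) (EuclideanSpace.single l 1) i * fderiv ℝ η (Psi y) (EuclideanSpace.single t 1) l))) * (∑ k : Fin 3, fderiv ℝ Phi (Psi y) (EuclideanSpace.single k 1) j * v (Psi y) k) - (((Matrix.of fun p q : Fin 3 => fderiv ℝ Phi (Psi y) (EuclideanSpace.single q 1) p).det)⁻¹ * ∑ l : Fin 3, fderiv ℝ Phi (Psi y) (EuclideanSpace.single l 1) i * η (Psi y) l) * (∑ k : Fin 3, (fderiv ℝ (fderiv ℝ Phi) (Psi y) (EuclideanSpace.single t 1) (EuclideanSpace.single k 1) j * v (Psi y) k + fderiv ℝ Phi (Psi y) (EuclideanSpace.single k 1) j * fderiv ℝ v (Psi y) (EuclideanSpace.single t 1) k))) := by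
      intro i j
      have hPQfun : (fun y' => Pmap Phi Psi v y' i * Qmap Phi Psi η y' j
          - Qmap Phi Psi η y' i * Pmap Phi Psi v y' j)
        = fun y' =>
          (∑ k : Fin 3, v (Psi y') k * fderiv ℝ Phi (Psi y') (EuclideanSpace.single k 1) i) *
            (((Matrix.of fun p q : Fin 3 => fderiv ℝ Phi (Psi y') (EuclideanSpace.single q 1) p).det)⁻¹ *
              (∑ k : Fin 3, η (Psi y') k * fderiv ℝ Phi (Psi y') (EuclideanSpace.single k 1) j))
          - (((Matrix.of fun p q : Fin 3 => fderiv ℝ Phi (Psi y') (EuclideanSpace.single q 1) p).det)⁻¹ *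
              (∑ k : Fin 3, η (Psi y') k * fderiv ℝ Phi (Psi y') (EuclideanSpace.single k 1) i)) *
            (∑ k : Fin 3, v (Psi y') k * fderiv ℝ Phi (Psi y') (EuclideanSpace.single k 1) j) := by
        funext y'
        rw [hPcomp y' i, hPcomp y' j, hQcomp y' i, hQcomp y' j]
      rw [hPQfun, (((hp i).fun_mul (hq j)).fun_sub ((hq i).fun_mul (hp j))).fderiv]
      simp only [ContinuousLinearMap.sub_apply, ContinuousLinearMap.add_apply,
        ContinuousLinearMap.smul_apply, smul_eq_mul, hexp, hFQval, hFPval, Fin.sum_univ_three]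
      ring
    have hBv : ∀ k j : Fin 3, fderiv ℝ (fun z => v z k * η z j - η z k * v z j) (Psi y)
        (EuclideanSpace.single j 1) = fderiv ℝ v (Psi y) (EuclideanSpace.single j 1) k * η (Psi y) j + v (Psi y) k * fderiv ℝ η (Psi y) (EuclideanSpace.single j 1) j - (fderiv ℝ η (Psi y) (EuclideanSpace.single j 1) k * v (Psi y) j + η (Psi y) k * fderiv ℝ v (Psi y) (EuclideanSpace.single j 1) j) := by
      intro k j
      rw [(((hvc k).fun_mul (hηc j)).fun_sub ((hηc k).fun_mul (hvc j))).fderiv]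
      simp only [ContinuousLinearMap.sub_apply, ContinuousLinearMap.add_apply,
        ContinuousLinearMap.smul_apply, ContinuousLinearMap.comp_apply, proj_apply', smul_eq_mul]
      ring
    have hcore := fun i : Fin 3 => core_bop
      (A := fun p q => fderiv ℝ Phi (Psi y) (EuclideanSpace.single q 1) p)
      (B := fun p q => fderiv ℝ Psi y (EuclideanSpace.single q 1) p)
      (S := fun p q j => fderiv ℝ (fderiv ℝ Phi) (Psi y)
        (EuclideanSpace.single j 1) (EuclideanSpace.single q 1) p)
      (T := fun l => ∑ p : Fin 3, ∑ q : Fin 3,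
        fderiv ℝ Psi y (EuclideanSpace.single p 1) q *
        fderiv ℝ (fderiv ℝ Phi) (Psi y) (EuclideanSpace.single l 1) (EuclideanSpace.single q 1) p)
      hBA hS (fun l => rfl) (dD := fun m => Dd (EuclideanSpace.single m 1))
      hdDmain hd1
      (fun k => v (Psi y) k) (fun k => η (Psi y) k)
      (fun k m => fderiv ℝ v (Psi y) (EuclideanSpace.single m 1) k)
      (fun k m => fderiv ℝ η (Psi y) (EuclideanSpace.single m 1) k) i
    apply PiLp.ext
    intro i
    have hLHS : Bop (Pmap Phi Psi v) (Qmap Phi Psi η) y i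
        = ∑ j : Fin 3, ∑ t : Fin 3, fderiv ℝ Psi y (EuclideanSpace.single j 1) t * ((∑ k : Fin 3, (fderiv ℝ (fderiv ℝ Phi) (Psi y) (EuclideanSpace.single t 1) (EuclideanSpace.single k 1) i * v (Psi y) k + fderiv ℝ Phi (Psi y) (EuclideanSpace.single k 1) i * fderiv ℝ v (Psi y) (EuclideanSpace.single t 1) k)) * (((Matrix.of fun p q : Fin 3 => fderiv ℝ Phi (Psi y) (EuclideanSpace.single q 1) p).det)⁻¹ * ∑ l : Fin 3, fderiv ℝ Phi (Psi y) (EuclideanSpace.single l 1) j * η (Psi y) l) + (∑ k : Fin 3, fderiv ℝ Phi (Psi y) (EuclideanSpace.single k 1) i * v (Psi y) k) * (-(((Matrix.of fun p q : Fin 3 => fderiv ℝ Phi (Psi y) (EuclideanSpace.single q 1) p).det)⁻¹ * ((Matrix.of fun p q : Fin 3 => fderiv ℝ Phi (Psi y) (EuclideanSpace.single q 1) p).det)⁻¹ * Dd (EuclideanSpace.single t 1)) * (∑ l : Fin 3, fderiv ℝ Phi (Psi y) (EuclideanSpace.single l 1) j * η (Psi y) l) + ((Matrix.of fun p q : Fin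 3 => fderiv ℝ Phi (Psi y) (EuclideanSpace.single q 1) p).det)⁻¹ * (∑ l : Fin 3, (fderiv ℝ (fderiv ℝ Phi) (Psi y) (EuclideanSpace.single t 1) (EuclideanSpace.single l 1) j * η (Psi y) l + fderiv ℝ Phi (Psi y) (EuclideanSpace.single l 1) j * fderiv ℝ η (Psi y) (EuclideanSpace.single t 1) l))) - (-(((Matrix.of fun p q : Fin 3 => fderiv ℝ Phi (Psi y) (EuclideanSpace.single q 1) p).det)⁻¹ * ((Matrix.of fun p q : Fin 3 => fderiv ℝ Phi (Psi y) (EuclideanSpace.single q 1) p).det)⁻¹ * Dd (EuclideanSpace.single t 1)) * (∑ l : Fin 3, fderiv ℝ Phi (Psi y) (EuclideanSpace.single l 1) i * η (Psi y) l) + ((Matrix.of fun p q : Fin 3 => fderiv ℝ Phi (Psi y) (EuclideanSpace.single q 1) p).det)⁻¹ * (∑ l : Fin 3, (fderiv ℝ (fderiv ℝ Phi) (Psi y) (EuclideanSpace.single t 1) (EuclideanSpace.single l 1) i * η (Psi y) l + fderiv ℝ Phi (Psi y) (EuclideanSpace.single l 1) i * fderiv ℝ η (Psi y) (EuclideanSpace.single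 t 1) l))) * (∑ k : Fin 3, fderiv ℝ Phi (Psi y) (EuclideanSpace.single k 1) j * v (Psi y) k) - (((Matrix.of fun p q : Fin 3 => fderiv ℝ Phi (Psi y) (EuclideanSpace.single q 1) p).det)⁻¹ * ∑ l : Fin 3, fderiv ℝ Phi (Psi y) (EuclideanSpace.single l 1) i * η (Psi y) l) * (∑ k : Fin 3, (fderiv ℝ (fderiv ℝ Phi) (Psi y) (EuclideanSpace.single t 1) (EuclideanSpace.single k 1) j * v (Psi y) k + fderiv ℝ Phi (Psi y) (EuclideanSpace.single k 1) j * fderiv ℝ v (Psi y) (EuclideanSpace.single t 1) k))) := by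
      simp only [Bop, mk3v_apply]
      exact Finset.sum_congr rfl fun j _ => hfd_ij i j
    have hRHS : (((fderiv ℝ Phi (Psi y)).det)⁻¹ • (fderiv ℝ Phi (Psi y)) (Bop v η (Psi y))) i
        = ((Matrix.of fun p q : Fin 3 => fderiv ℝ Phi (Psi y) (EuclideanSpace.single q 1) p).det)⁻¹ * ∑ q : Fin 3, (Bop v η (Psi y)) q *
            fderiv ℝ Phi (Psi y) (EuclideanSpace.single q 1) i := by
      rw [PiLp.smul_apply, smul_eq_mul, hdetEq (Psi y), clm_entry]
    rw [hLHS, hRHS, hcore i]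
    simp only [Bop, mk3v_apply, hBv, Fin.sum_univ_three]
    ring
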